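/- Let n ≥ 2 and let μ : 𝓗(S^{n−1}) → ℝ be a functional on the set of restrictions of support functions to the sphere. Then μ is sequentially continuous with respect to τ-convergence if and only if μ is sequentially continuous with respect to the uniform norm ‖·‖_∞ on S^{n−1}. -/

import Mathlib

open MeasureTheory Filter Topology Metric Set
open scoped InnerProductSpace ENNReal NNReal Pointwise

noncomputable section

/-- Euclidean space `ℝ^n`. -/
abbrev Eucl (n : ℕ) : Type := EuclideanSpace ℝ (Fin n)

/-- The unit sphere `S^{n-1} ⊆ ℝ^n`. -/
abbrev Sph (n : ℕ) := Metric.sphere (0 : Eucl n) 1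

/-- The Hausdorff measure `H^{n-1}` on the unit sphere of `ℝ^n`. -/
def sphMeasure (n : ℕ) : Measure (Sph n) := μH[(n : ℝ) - 1]

open Classical in
/-- The 1-homogeneous extension of a function on the sphere to `ℝ^n`. -/
def homExt {n : ℕ} (u : Sph n → ℝ) (x : Eucl n) : ℝ :=
  if hx : x = 0 then 0
  else ‖x‖ * u ⟨‖x‖⁻¹ • x, by
    rw [mem_sphere_zero_iff_norm, norm_smul, norm_inv, norm_norm,
      inv_mul_cancel₀ (norm_ne_zero_iff.mpr hx)]⟩

/-- `u` is differentiable at `x ∈ S^{n-1}` (as a function on the sphere): its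
1-homogeneous extension is differentiable at `x`. -/
def SphDiffAt {n : ℕ} (u : Sph n → ℝ) (x : Sph n) : Prop :=
  DifferentiableAt ℝ (homExt u) (x : Eucl n)

/-- The spherical gradient of `u` at `x ∈ S^{n-1}`: the gradient of the
1-homogeneous extension minus its radial component.  It is the tangent vector
to the sphere representing the differential of `u` at `x`. -/
def sphGrad {n : ℕ} (u : Sph n → ℝ) (x : Sph n) : Eucl n :=
  gradient (homExt u) (x : Eucl n) - u x • (x : Eucl n)

/-- `u : S^{n-1} → ℝ` is Lipschitz. -/
def IsLip {n : ℕ} (u : Sph n → ℝ) : Prop := ∃ L : ℝ≥0, LipschitzWith L u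

/-- τ-convergence of a sequence of functions on the sphere: uniform convergence,
`H^{n-1}`-a.e. convergence of the spherical gradients, and a uniform a.e. bound
on the norms of the spherical gradients. -/
def TauTendsto {n : ℕ} (u_ : ℕ → Sph n → ℝ) (u : Sph n → ℝ) : Prop :=
  TendstoUniformly u_ u atTop ∧
  (∀ᵐ x ∂sphMeasure n, Tendsto (fun i => sphGrad (u_ i) x) atTop (𝓝 (sphGrad u x))) ∧
  ∃ C : ℝ, 0 < C ∧ ∀ i, ∀ᵐ x ∂sphMeasure n, ‖sphGrad (u_ i) x‖ ≤ C

/-- `μ` is a valuation on `Lip(S^{n-1})`: it is finitely additive with respect to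
pointwise maximum and minimum of Lipschitz functions. -/
def IsValuation {n : ℕ} (μ : (Sph n → ℝ) → ℝ) : Prop :=
  ∀ u v : Sph n → ℝ, IsLip u → IsLip v → μ (u ⊔ v) + μ (u ⊓ v) = μ u + μ v

/-- `μ` is continuous on `Lip(S^{n-1})` with respect to τ-convergence. -/
def TauContinuous {n : ℕ} (μ : (Sph n → ℝ) → ℝ) : Prop :=
  ∀ (u_ : ℕ → Sph n → ℝ) (u : Sph n → ℝ), (∀ i, IsLip (u_ i)) → IsLip u →
    TauTendsto u_ u → Tendsto (fun i => μ (u_ i)) atTop (𝓝 (μ u))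

/-- A rotation `φ ∈ O(n)` acting on the sphere. -/
def sphMap {n : ℕ} (φ : Eucl n ≃ₗᵢ[ℝ] Eucl n) (x : Sph n) : Sph n :=
  ⟨φ x, by
    rw [mem_sphere_zero_iff_norm, φ.norm_map]
    exact mem_sphere_zero_iff_norm.mp x.2⟩

/-- `μ` is rotation invariant: `μ (u ∘ φ) = μ u` for every `φ ∈ O(n)`. -/
def RotationInvariant {n : ℕ} (μ : (Sph n → ℝ) → ℝ) : Prop :=
  ∀ u : Sph n → ℝ, IsLip u → ∀ φ : Eucl n ≃ₗᵢ[ℝ] Eucl n, μ (u ∘ sphMap φ) = μ u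

/-- `μ` is dot product invariant: invariant under adding restrictions to the
sphere of linear functions `⟨·, y⟩`. -/
def DotProductInvariant {n : ℕ} (μ : (Sph n → ℝ) → ℝ) : Prop :=
  ∀ u : Sph n → ℝ, IsLip u → ∀ y : Eucl n,
    μ (fun x => u x + ⟪(x : Eucl n), y⟫_ℝ) = μ u

/-- `μ` is homogeneous of degree `i`. -/
def IsHomogeneous {n : ℕ} (μ : (Sph n → ℝ) → ℝ) (i : ℕ) : Prop :=
  ∀ u : Sph n → ℝ, IsLip u → ∀ lam : ℝ, 0 < lam →
    μ (fun x => lam * u x) = lam ^ i * μ u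

/-- The support function of a subset of `ℝ^n`. -/
def suppFn {n : ℕ} (K : Set (Eucl n)) (x : Eucl n) : ℝ :=
  sSup ((fun y => ⟪x, y⟫_ℝ) '' K)

/-- A convex body: a nonempty compact convex subset of `ℝ^n`. -/
def IsConvexBody {n : ℕ} (K : Set (Eucl n)) : Prop :=
  K.Nonempty ∧ IsCompact K ∧ Convex ℝ K

/-- `h` belongs to `𝓗(S^{n-1})`: `h` is the restriction to the sphere of the
support function of some convex body. -/
def IsSuppRestriction {n : ℕ} (h : Sph n → ℝ) : Prop :=
  ∃ K : Set (Eucl n), IsConvexBody K ∧ ∀ x : Sph n, h x = suppFn K (x : Eucl n)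

/-!
Uniform convergence `h_i → h` on the sphere of restricted support functions gives pointwise
convergence on `ℝ^n` of their 1-homogeneous extensions `h_{K_i} → h_K`, which are convex. For
convex functions, derivatives are squeezed between secant slopes, so pointwise convergence forces
convergence of the gradients at every point where all of them are differentiable. The exceptional
set is Lebesgue-null by Rademacher's theorem and a cone by homogeneity, so it meets the sphere in
an `H^{n-1}`-null set. The spherical gradients of `h_K` are bounded by twice
`sup_S |h_K|`, and a uniformly convergent sequence of continuous functions on a compact space is
uniformly bounded. Conversely, τ-convergence includes uniform convergence.
-/

section ConvexDeriv

variable {E : Type*} [NormedAddCommGroup E] [NormedSpace ℝ E] {f : E → ℝ} {x : E}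

lemma ConvexOn.convexOn_line (hf : ConvexOn ℝ univ f) (x w : E) :
    ConvexOn ℝ univ fun s : ℝ => f (x + s • w) := by
  refine ⟨convex_univ, fun a _ b _ p q hp hq hpq => ?_⟩
  convert hf.2 (mem_univ (x + a • w)) (mem_univ (x + b • w)) hp hq hpq using 2
  linear_combination (norm := module) -hpq • x

lemma DifferentiableAt.hasDerivAt_line (hd : DifferentiableAt ℝ f x) (w : E) :
    HasDerivAt (fun s : ℝ => f (x + s • w)) (fderiv ℝ f x w) 0 := by
  have hline : HasDerivAt (fun s : ℝ => x + s • w) w 0 := by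
    simpa using ((hasDerivAt_id (0 : ℝ)).smul_const w).const_add x
  exact (by simpa using hd.hasFDerivAt : HasFDerivAt f (fderiv ℝ f x) (x + (0 : ℝ) • w))
    |>.comp_hasDerivAt 0 hline

lemma ConvexOn.fderiv_apply_le_slope (hf : ConvexOn ℝ univ f) (hd : DifferentiableAt ℝ f x)
    (w : E) {t : ℝ} (ht : 0 < t) :
    fderiv ℝ f x w ≤ slope (fun s : ℝ => f (x + s • w)) 0 t :=
  (hf.convexOn_line x w).le_slope_of_hasDerivAt (mem_univ _) (mem_univ _) ht
    (hd.hasDerivAt_line w)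

lemma ConvexOn.slope_le_fderiv_apply (hf : ConvexOn ℝ univ f) (hd : DifferentiableAt ℝ f x)
    (w : E) {t : ℝ} (ht : t < 0) :
    slope (fun s : ℝ => f (x + s • w)) 0 t ≤ fderiv ℝ f x w := by
  rw [slope_comm]
  exact (hf.convexOn_line x w).slope_le_of_hasDerivAt (mem_univ _) (mem_univ _) ht
    (hd.hasDerivAt_line w)

lemma tendsto_fderiv_apply_of_convexOn {ι : Type*} {l : Filter ι} {f_ : ι → E → ℝ}
    (hf_ : ∀ i, ConvexOn ℝ univ (f_ i))
    (hlim : ∀ z, Tendsto (fun i => f_ i z) l (𝓝 (f z)))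
    (hd_ : ∀ i, DifferentiableAt ℝ (f_ i) x) (hd : DifferentiableAt ℝ f x) (w : E) :
    Tendsto (fun i => fderiv ℝ (f_ i) x w) l (𝓝 (fderiv ℝ f x w)) := by
  have hslope : ∀ t, Tendsto (fun i => slope (fun s : ℝ => f_ i (x + s • w)) 0 t) l
      (𝓝 (slope (fun s : ℝ => f (x + s • w)) 0 t)) := fun t => by
    simp only [slope_def_field]
    exact ((hlim _).sub (hlim _)).div_const _
  have hderiv := hasDerivAt_iff_tendsto_slope.1 (hd.hasDerivAt_line w)
  refine tendsto_order.2 ⟨fun a ha => ?_, fun b hb => ?_⟩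
  · obtain ⟨t, hta, ht⟩ := ((hderiv.mono_left (nhdsLT_le_nhdsNE 0)).eventually
      (lt_mem_nhds ha) |>.and self_mem_nhdsWithin).exists
    filter_upwards [(hslope t).eventually (lt_mem_nhds hta)] with i hi
    exact hi.trans_le ((hf_ i).slope_le_fderiv_apply (hd_ i) w ht)
  · obtain ⟨t, htb, ht⟩ := ((hderiv.mono_left (nhdsGT_le_nhdsNE 0)).eventually
      (gt_mem_nhds hb) |>.and self_mem_nhdsWithin).exists
    filter_upwards [(hslope t).eventually (gt_mem_nhds htb)] with i hi
    exact ((hf_ i).fderiv_apply_le_slope (hd_ i) w ht).trans_lt hi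

lemma tendsto_gradient_of_convexOn {F : Type*} [NormedAddCommGroup F] [InnerProductSpace ℝ F]
    [FiniteDimensional ℝ F] {ι : Type*} {l : Filter ι} {f_ : ι → F → ℝ} {f : F → ℝ} {x : F}
    (hf_ : ∀ i, ConvexOn ℝ univ (f_ i))
    (hlim : ∀ z, Tendsto (fun i => f_ i z) l (𝓝 (f z)))
    (hd_ : ∀ i, DifferentiableAt ℝ (f_ i) x) (hd : DifferentiableAt ℝ f x) :
    Tendsto (fun i => gradient (f_ i) x) l (𝓝 (gradient f x)) := by
  let b := stdOrthonormalBasis ℝ F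
  have hexpand : ∀ g : F → ℝ, gradient g x = ∑ k, fderiv ℝ g x (b k) • b k := fun g => by
    conv_lhs => rw [← b.sum_repr' (gradient g x)]
    simp only [gradient, real_inner_comm _ (b _), InnerProductSpace.toDual_symm_apply]
  simp only [hexpand]
  exact tendsto_finsetSum _ fun k _ =>
    (tendsto_fderiv_apply_of_convexOn hf_ hlim hd_ hd (b k)).smul_const (b k)

end ConvexDeriv

section SphereNull

lemma lipschitzOnWith_inv_norm_smul {E : Type*} [NormedAddCommGroup E] [NormedSpace ℝ E] :
    LipschitzOnWith 2 (fun v : E => ‖v‖⁻¹ • v) {v | 1 ≤ ‖v‖} := by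
  refine LipschitzOnWith.of_dist_le_mul fun v (hv : 1 ≤ ‖v‖) w (hw : 1 ≤ ‖w‖) => ?_
  have hv0 : 0 < ‖v‖ := one_pos.trans_le hv
  have hw0 : 0 < ‖w‖ := one_pos.trans_le hw
  have hcoeff : ‖v‖⁻¹ * ‖w‖⁻¹ * (‖w‖ - ‖v‖) = ‖v‖⁻¹ - ‖w‖⁻¹ := by field_simp
  have hsplit : ‖v‖⁻¹ • v - ‖w‖⁻¹ • w
      = ‖v‖⁻¹ • (v - w) + (‖v‖⁻¹ * ‖w‖⁻¹ * (‖w‖ - ‖v‖)) • w := by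
    rw [hcoeff, smul_sub, sub_smul]; abel
  rw [dist_eq_norm, dist_eq_norm]
  calc ‖‖v‖⁻¹ • v - ‖w‖⁻¹ • w‖
      ≤ ‖v‖⁻¹ * ‖v - w‖ + ‖v‖⁻¹ * |‖w‖ - ‖v‖| := by
        rw [hsplit]
        refine (norm_add_le _ _).trans (add_le_add ?_ ?_)
        · rw [norm_smul, Real.norm_of_nonneg (inv_nonneg.2 hv0.le)]
        · rw [norm_smul, Real.norm_eq_abs, abs_mul, abs_mul, abs_of_pos (inv_pos.2 hv0),
            abs_of_pos (inv_pos.2 hw0)]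
          exact le_of_eq (by field_simp)
    _ ≤ 1 * ‖v - w‖ + 1 * ‖v - w‖ := by
        gcongr
        · exact inv_le_one_of_one_le₀ hv
        · exact inv_le_one_of_one_le₀ hv
        · rw [← norm_neg (v - w), neg_sub]; exact abs_norm_sub_norm_le w v
    _ = (2 : ℝ≥0) * ‖v - w‖ := by push_cast; ring

variable {m : ℕ}

def centralProj (j : Fin (m + 1)) (x : Eucl (m + 1)) : Fin m → ℝ :=
  fun i => x (j.succAbove i) / x j

def centralProjInv (j : Fin (m + 1)) (y : Fin m → ℝ) : Eucl (m + 1) :=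
  let v : Eucl (m + 1) := WithLp.toLp 2 (j.insertNth 1 y)
  ‖v‖⁻¹ • v

/-- By Fubini, almost every slice `{x j = t}` of the null cone `s` is null, and for `t > 0` that
slice contains `t • centralProj j '' {x ∈ s | 0 < x j}`. -/
lemma volume_image_centralProj_eq_zero {s : Set (Eucl (m + 1))} (hs : volume s = 0)
    (hcone : ∀ x ∈ s, ∀ t : ℝ, 0 < t → t • x ∈ s) (j : Fin (m + 1)) :
    volume (centralProj j '' {x ∈ s | 0 < x j}) = 0 := by
  set e := (MeasurableEquiv.toLp 2 (Fin (m + 1) → ℝ)).symm.trans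
    (MeasurableEquiv.piFinSuccAbove (fun _ => ℝ) j)
  have he : MeasurePreserving e volume (volume.prod volume) :=
    (measurePreserving_piFinSuccAbove (fun _ => volume) j).comp
      (EuclideanSpace.volume_preserving_symm_measurableEquiv_toLp _)
  have hslices := Measure.measure_ae_null_of_prod_null
    ((he.symm.measure_preimage_equiv s).trans hs)
  have : (ae (volume.restrict (Ioi (0 : ℝ)))).NeBot := ae_restrict_neBot.2 (by simp)
  obtain ⟨t, hnull, ht⟩ : ∃ t : ℝ, volume (Prod.mk t ⁻¹' (e.symm ⁻¹' s)) = 0 ∧ 0 < t :=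
    ((ae_restrict_of_ae hslices).and (ae_restrict_mem measurableSet_Ioi)).exists
  have hsub : t • centralProj j '' {x ∈ s | 0 < x j} ⊆ Prod.mk t ⁻¹' (e.symm ⁻¹' s) := by
    rintro _ ⟨_, ⟨x, ⟨hxs, hxj⟩, rfl⟩, rfl⟩
    have he_x : e ((t / x j) • x) = (t, t • centralProj j x) := by
      refine Prod.ext ?_ (funext fun i => ?_) <;>
      simp only [e, centralProj, MeasurableEquiv.trans_apply, MeasurableEquiv.toLp_symm_apply,
        WithLp.ofLp_smul, MeasurableEquiv.piFinSuccAbove_apply, Fin.insertNthEquiv_symm_apply,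
        Pi.smul_apply, smul_eq_mul, Fin.removeNth] <;>
      field_simp
    simpa [← he_x] using hcone x hxs _ (div_pos ht hxj)
  have hscaled := measure_mono_null hsub hnull
  rw [Measure.addHaar_smul, mul_eq_zero] at hscaled
  exact hscaled.resolve_left (by simp [ht.ne'])

lemma centralProjInv_centralProj {j : Fin (m + 1)} {x : Eucl (m + 1)} (hx : ‖x‖ = 1)
    (hxj : 0 < x j) : centralProjInv j (centralProj j x) = x := by
  have hv : WithLp.toLp 2 (j.insertNth 1 (centralProj j x)) = (x j)⁻¹ • x := by
    ext i
    refine Fin.succAboveCases j ?_ (fun k => ?_) i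
    · simp [hxj.ne']
    · simp [centralProj, div_eq_inv_mul]
  rw [centralProjInv, hv, norm_smul, hx, mul_one, Real.norm_of_nonneg (inv_nonneg.2 hxj.le),
    inv_inv, smul_smul, mul_inv_cancel₀ hxj.ne', one_smul]

lemma exists_lipschitzWith_centralProjInv (j : Fin (m + 1)) :
    ∃ K, LipschitzWith K (centralProjInv j) := by
  have hinsert : LipschitzWith 1 (fun y : Fin m → ℝ => (j.insertNth 1 y : Fin (m + 1) → ℝ)) := by
    refine LipschitzWith.of_dist_le_mul fun y y' => ?_
    rw [NNReal.coe_one, one_mul, dist_pi_le_iff dist_nonneg]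
    intro i
    refine Fin.succAboveCases j ?_ (fun k => ?_) i
    · simp
    · simpa using dist_le_pi_dist y y' k
  have hembed := (PiLp.lipschitzWith_toLp 2 fun _ : Fin (m + 1) => ℝ).comp hinsert
  refine ⟨_, lipschitzOnWith_univ.1 <| lipschitzOnWith_inv_norm_smul.comp hembed.lipschitzOnWith
    fun y _ => ?_⟩
  calc (1 : ℝ) = ‖(WithLp.toLp 2 (j.insertNth 1 y) : Eucl (m + 1)) j‖ := by simp
    _ ≤ ‖(WithLp.toLp 2 (j.insertNth 1 y) : Eucl (m + 1))‖ := PiLp.norm_apply_le _ j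

lemma hausdorffMeasure_hemisphere_eq_zero {s : Set (Eucl (m + 1))} (hs : volume s = 0)
    (hcone : ∀ x ∈ s, ∀ t : ℝ, 0 < t → t • x ∈ s) (j : Fin (m + 1)) :
    μH[m] {x ∈ s | ‖x‖ = 1 ∧ 0 < x j} = 0 := by
  obtain ⟨K, hK⟩ := exists_lipschitzWith_centralProjInv j
  have hproj : μH[m] (centralProj j '' {x ∈ s | 0 < x j}) = 0 := by
    have hvol := hausdorffMeasure_pi_real (ι := Fin m)
    rw [Fintype.card_fin] at hvol
    rw [hvol]
    exact volume_image_centralProj_eq_zero hs hcone j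
  have hsub : {x ∈ s | ‖x‖ = 1 ∧ 0 < x j}
      ⊆ centralProjInv j '' (centralProj j '' {x ∈ s | 0 < x j}) := by
    rintro x ⟨hxs, hx, hxj⟩
    exact ⟨centralProj j x, ⟨x, ⟨hxs, hxj⟩, rfl⟩, centralProjInv_centralProj hx hxj⟩
  refine measure_mono_null hsub (le_antisymm ?_ zero_le)
  simpa [hproj] using hK.hausdorffMeasure_image_le (Nat.cast_nonneg m)
    (centralProj j '' {x ∈ s | 0 < x j})

lemma hausdorffMeasure_sphere_inter_eq_zero {s : Set (Eucl (m + 1))} (hs : volume s = 0)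
    (hcone : ∀ x ∈ s, ∀ t : ℝ, 0 < t → t • x ∈ s) :
    μH[m] {x ∈ s | ‖x‖ = 1} = 0 := by
  have hcover : {x ∈ s | ‖x‖ = 1}
      ⊆ ⋃ j, ({x ∈ s | ‖x‖ = 1 ∧ 0 < x j} ∪ -{x ∈ -s | ‖x‖ = 1 ∧ 0 < x j}) := by
    rintro x ⟨hxs, hx⟩
    obtain ⟨j, hj⟩ : ∃ j, x j ≠ 0 := by
      by_contra! h
      have : x = 0 := by ext j; simp [h j]
      simp [this] at hx
    refine mem_iUnion.2 ⟨j, hj.lt_or_gt.elim (fun h => Or.inr ?_) (fun h => Or.inl ⟨hxs, hx, h⟩)⟩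
    exact ⟨by simpa using hxs, by simpa using hx, by simpa using h⟩
  refine measure_mono_null hcover (measure_iUnion_null fun j => measure_union_null
    (hausdorffMeasure_hemisphere_eq_zero hs hcone j) ?_)
  have hneg_null : volume (-s) = 0 := by rwa [Measure.measure_neg]
  have hneg_cone : ∀ x ∈ -s, ∀ t : ℝ, 0 < t → t • x ∈ -s := fun x hx t ht => by
    simpa [smul_neg] using hcone _ hx t ht
  rw [← image_neg_eq_neg, isometry_neg.hausdorffMeasure_image (Or.inl (Nat.cast_nonneg m))]
  exact hausdorffMeasure_hemisphere_eq_zero hneg_null hneg_cone j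

lemma sphMeasure_eq_zero_of_cone {n : ℕ} {s : Set (Eucl n)} (hs : volume s = 0)
    (hcone : ∀ x ∈ s, ∀ t : ℝ, 0 < t → t • x ∈ s) :
    sphMeasure n {x | (x : Eucl n) ∈ s} = 0 := by
  cases n with
  | zero =>
    have : IsEmpty (Sph 0) := ⟨fun x => by simpa [Subsingleton.elim (x : Eucl 0) 0] using x.2⟩
    rw [Set.eq_empty_of_isEmpty {x : Sph 0 | _}, measure_empty]
  | succ m =>
    have hdim : ((m + 1 : ℕ) : ℝ) - 1 = m := by push_cast; ring
    rw [sphMeasure, hdim, ← isometry_subtype_coe.hausdorffMeasure_image (Or.inl (Nat.cast_nonneg m))]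
    refine measure_mono_null ?_ (hausdorffMeasure_sphere_inter_eq_zero hs hcone)
    rintro _ ⟨x, hx, rfl⟩
    exact ⟨hx, mem_sphere_zero_iff_norm.1 x.2⟩

end SphereNull

def IsPosHomogeneous {E : Type*} [SMul ℝ E] (f : E → ℝ) : Prop :=
  ∀ t : ℝ, 0 ≤ t → ∀ x, f (t • x) = t * f x

section Homogeneous

variable {n : ℕ} {f : Eucl n → ℝ}

lemma IsPosHomogeneous.homExt_eq (hf : IsPosHomogeneous f) {u : Sph n → ℝ}
    (hu : ∀ x, u x = f x) : homExt u = f := by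
  funext z
  by_cases hz : z = 0
  · simpa [homExt, hz] using (hf 0 le_rfl 0).symm
  · rw [homExt, dif_neg hz, hu, hf _ (inv_nonneg.2 (norm_nonneg z)), ← mul_assoc,
      mul_inv_cancel₀ (norm_ne_zero_iff.2 hz), one_mul]

lemma tendsto_homExt {ι : Type*} {l : Filter ι} {u_ : ι → Sph n → ℝ} {u : Sph n → ℝ}
    (hlim : ∀ x, Tendsto (fun i => u_ i x) l (𝓝 (u x))) (z : Eucl n) :
    Tendsto (fun i => homExt (u_ i) z) l (𝓝 (homExt u z)) := by
  by_cases hz : z = 0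
  · simpa [homExt, hz] using tendsto_const_nhds
  · simp only [homExt, dif_neg hz]
    exact (hlim _).const_mul _

lemma IsPosHomogeneous.differentiableAt_of_smul (hf : IsPosHomogeneous f) {t : ℝ}
    (ht : 0 < t) {x : Eucl n} (hd : DifferentiableAt ℝ f (t • x)) : DifferentiableAt ℝ f x := by
  have hf_eq : (fun y => t⁻¹ * f (t • y)) = f := funext fun y => by
    rw [hf t ht.le, inv_mul_cancel_left₀ ht.ne']
  rw [← hf_eq]
  exact (hd.comp x (differentiableAt_id.const_smul t)).const_mul _

lemma LipschitzWith.ae_differentiableAt_sphere {L : ℝ≥0} (hL : LipschitzWith L f)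
    (hf : IsPosHomogeneous f) : ∀ᵐ x : Sph n ∂sphMeasure n, DifferentiableAt ℝ f x := by
  rw [ae_iff]
  exact sphMeasure_eq_zero_of_cone (ae_iff.1 hL.ae_differentiableAt)
    fun x hx t ht hdt => hx (hf.differentiableAt_of_smul ht hdt)

end Homogeneous

section SupportFunction

variable {n : ℕ} {K : Set (Eucl n)}

lemma isPosHomogeneous_suppFn (K : Set (Eucl n)) : IsPosHomogeneous (suppFn K) := by
  intro t ht x
  simp only [suppFn, real_inner_smul_left]
  rw [← smul_eq_mul, ← Real.sSup_smul_of_nonneg ht, ← Set.image_smul, Set.image_image]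
  rfl

lemma inner_le_suppFn (hK : IsCompact K) (x : Eucl n) {y : Eucl n} (hy : y ∈ K) :
    ⟪x, y⟫_ℝ ≤ suppFn K x :=
  le_csSup (hK.image (innerSL ℝ x).continuous).bddAbove (mem_image_of_mem _ hy)

lemma exists_inner_eq_suppFn (hK : IsCompact K) (hne : K.Nonempty) (x : Eucl n) :
    ∃ y ∈ K, suppFn K x = ⟪x, y⟫_ℝ := by
  obtain ⟨y, hy, hmax⟩ :=
    hK.exists_isMaxOn hne (innerSL ℝ x).continuous.continuousOn
  refine ⟨y, hy, le_antisymm ?_ (inner_le_suppFn hK x hy)⟩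
  exact csSup_le (hne.image _) (by rintro _ ⟨z, hz, rfl⟩; exact hmax hz)

lemma convexOn_suppFn (hK : IsCompact K) (hne : K.Nonempty) : ConvexOn ℝ univ (suppFn K) := by
  refine ⟨convex_univ, fun x _ x' _ a b ha hb _ => ?_⟩
  obtain ⟨y, hy, hxy⟩ := exists_inner_eq_suppFn hK hne (a • x + b • x')
  rw [hxy, inner_add_left, real_inner_smul_left, real_inner_smul_left, smul_eq_mul, smul_eq_mul]
  gcongr
  exacts [inner_le_suppFn hK x hy, inner_le_suppFn hK x' hy]

lemma lipschitzWith_suppFn (hK : IsCompact K) (hne : K.Nonempty) {R : ℝ}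
    (hR : ∀ y ∈ K, ‖y‖ ≤ R) : LipschitzWith R.toNNReal (suppFn K) := by
  refine LipschitzWith.of_le_add_mul' R fun x x' => ?_
  obtain ⟨y, hy, hxy⟩ := exists_inner_eq_suppFn hK hne x
  calc suppFn K x = ⟪x', y⟫_ℝ + ⟪x - x', y⟫_ℝ := by rw [hxy, ← inner_add_left, add_sub_cancel]
    _ ≤ suppFn K x' + R * dist x x' := by
        gcongr
        · exact inner_le_suppFn hK x' hy
        · rw [dist_eq_norm, mul_comm]
          exact (real_inner_le_norm _ _).trans (by gcongr; exact hR y hy)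

lemma norm_le_of_suppFn_le (hK : IsCompact K) {C : ℝ} (hC₀ : 0 ≤ C)
    (hC : ∀ x : Sph n, suppFn K x ≤ C) {y : Eucl n} (hy : y ∈ K) : ‖y‖ ≤ C := by
  rcases eq_or_ne y 0 with rfl | hy0
  · simpa using hC₀
  have hunit : ‖‖y‖⁻¹ • y‖ = 1 := norm_smul_inv_norm hy0
  calc ‖y‖ = ⟪‖y‖⁻¹ • y, y⟫_ℝ := by
        rw [real_inner_smul_left, real_inner_self_eq_norm_sq]
        field_simp [norm_ne_zero_iff.2 hy0]
    _ ≤ suppFn K (‖y‖⁻¹ • y) := inner_le_suppFn hK _ hy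
    _ ≤ C := hC ⟨_, mem_sphere_zero_iff_norm.2 hunit⟩

lemma exists_lipschitzWith_suppFn (hK : IsCompact K) (hne : K.Nonempty) :
    ∃ L, LipschitzWith L (suppFn K) := by
  obtain ⟨R, hR⟩ := hK.isBounded.exists_norm_le
  exact ⟨_, lipschitzWith_suppFn hK hne hR⟩

end SupportFunction

lemma TendstoUniformly.exists_forall_abs_le {X : Type*} [TopologicalSpace X] [CompactSpace X]
    {u_ : ℕ → X → ℝ} {u : X → ℝ} (hcont : ∀ i, Continuous (u_ i))
    (hunif : TendstoUniformly u_ u atTop) : ∃ C, 0 < C ∧ ∀ i x, |u_ i x| ≤ C := by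
  let F : ℕ → C(X, ℝ) := fun i => ⟨u_ i, hcont i⟩
  have hF : Tendsto F atTop (𝓝 ⟨u, hunif.continuous (.of_forall hcont)⟩) :=
    ContinuousMap.tendsto_iff_tendstoUniformly.2 hunif
  obtain ⟨C, hC, hbound⟩ := (Metric.isBounded_range_of_tendsto F hF).exists_pos_norm_le
  exact ⟨C, hC, fun i x => ((F i).norm_coe_le_norm x).trans (hbound _ ⟨i, rfl⟩)⟩

section Tau

variable {n : ℕ}

lemma ae_tendsto_sphGrad {h_ : ℕ → Sph n → ℝ} {h : Sph n → ℝ}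
    (hh_ : ∀ i, IsSuppRestriction (h_ i)) (hh : IsSuppRestriction h)
    (hlim : ∀ x, Tendsto (fun i => h_ i x) atTop (𝓝 (h x))) :
    ∀ᵐ x ∂sphMeasure n, Tendsto (fun i => sphGrad (h_ i) x) atTop (𝓝 (sphGrad h x)) := by
  choose K_ hK_ hhK_ using hh_
  obtain ⟨K, hK, hhK⟩ := hh
  have hext_ i : homExt (h_ i) = suppFn (K_ i) :=
    (isPosHomogeneous_suppFn _).homExt_eq (hhK_ i)
  have hext : homExt h = suppFn K := (isPosHomogeneous_suppFn _).homExt_eq hhK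
  have hlimExt z : Tendsto (fun i => suppFn (K_ i) z) atTop (𝓝 (suppFn K z)) := by
    simpa only [hext_, hext] using tendsto_homExt hlim z
  have hdiff {K : Set (Eucl n)} (hK : IsConvexBody K) :
      ∀ᵐ x : Sph n ∂sphMeasure n, DifferentiableAt ℝ (suppFn K) x :=
    (exists_lipschitzWith_suppFn hK.2.1 hK.1).elim fun _ hL =>
      hL.ae_differentiableAt_sphere (isPosHomogeneous_suppFn _)
  filter_upwards [ae_all_iff.2 fun i => hdiff (hK_ i), hdiff hK] with x hd_ hd
  simp only [sphGrad, hext_, hext]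
  exact (tendsto_gradient_of_convexOn (fun i => convexOn_suppFn (hK_ i).2.1 (hK_ i).1) hlimExt
    hd_ hd).sub ((hlim x).smul_const _)

lemma norm_sphGrad_le {K : Set (Eucl n)} (hK : IsCompact K) (hne : K.Nonempty)
    {h : Sph n → ℝ} (hh : ∀ x, h x = suppFn K x) {C : ℝ} (hC₀ : 0 ≤ C)
    (hC : ∀ x, |h x| ≤ C) (x : Sph n) : ‖sphGrad h x‖ ≤ 2 * C := by
  have hR : ∀ y ∈ K, ‖y‖ ≤ C :=
    fun y hy => norm_le_of_suppFn_le hK hC₀ (fun x => hh x ▸ (le_abs_self _).trans (hC x)) hy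
  have hgrad : ‖gradient (suppFn K) x‖ ≤ C := by
    by_cases hd : DifferentiableAt ℝ (suppFn K) x
    · rw [gradient, LinearIsometryEquiv.norm_map]
      simpa [Real.coe_toNNReal _ hC₀] using
        hd.hasFDerivAt.le_of_lipschitz (lipschitzWith_suppFn hK hne hR)
    · simpa [gradient_eq_zero_of_not_differentiableAt hd] using hC₀
  rw [sphGrad, (isPosHomogeneous_suppFn K).homExt_eq hh]
  calc _ ≤ ‖gradient (suppFn K) x‖ + ‖h x • (x : Eucl n)‖ := norm_sub_le _ _
    _ ≤ C + C := by
        gcongr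
        rw [norm_smul, norm_eq_of_mem_sphere x, mul_one, Real.norm_eq_abs]
        exact hC x
    _ = 2 * C := by ring

lemma tauTendsto_of_tendstoUniformly {h_ : ℕ → Sph n → ℝ} {h : Sph n → ℝ}
    (hh_ : ∀ i, IsSuppRestriction (h_ i)) (hh : IsSuppRestriction h)
    (hunif : TendstoUniformly h_ h atTop) : TauTendsto h_ h := by
  refine ⟨hunif, ae_tendsto_sphGrad hh_ hh hunif.tendsto_at, ?_⟩
  choose K_ hK_ hhK_ using hh_
  have hcont i : Continuous (h_ i) := by
    obtain ⟨L, hL⟩ := exists_lipschitzWith_suppFn (hK_ i).2.1 (hK_ i).1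
    rw [funext (hhK_ i)]
    exact hL.continuous.comp continuous_subtype_val
  obtain ⟨C, hC, hbound⟩ := hunif.exists_forall_abs_le hcont
  exact ⟨2 * C, by positivity, fun i => .of_forall <|
    norm_sphGrad_le (hK_ i).2.1 (hK_ i).1 (hhK_ i) hC.le (hbound i)⟩

end Tau

theorem tau_continuity_iff_uniform_continuity_on_H_general (n : ℕ)
    (μ : (Sph n → ℝ) → ℝ) :
    (∀ (h_ : ℕ → Sph n → ℝ) (h : Sph n → ℝ), (∀ i, IsSuppRestriction (h_ i)) →
      IsSuppRestriction h → TauTendsto h_ h →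
      Tendsto (fun i => μ (h_ i)) atTop (𝓝 (μ h))) ↔
    (∀ (h_ : ℕ → Sph n → ℝ) (h : Sph n → ℝ), (∀ i, IsSuppRestriction (h_ i)) →
      IsSuppRestriction h → TendstoUniformly h_ h atTop →
      Tendsto (fun i => μ (h_ i)) atTop (𝓝 (μ h))) :=
  ⟨fun hτ h_ h hh_ hh hunif => hτ h_ h hh_ hh (tauTendsto_of_tendstoUniformly hh_ hh hunif),
    fun hunif h_ h hh_ hh hτ => hunif h_ h hh_ hh hτ.1⟩

/-- A functional on `𝓗(S^{n-1})` (restrictions of support functions) is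
sequentially continuous with respect to τ-convergence if and only if it is
sequentially continuous with respect to uniform convergence. -/
theorem tau_continuity_iff_uniform_continuity_on_H (n : ℕ) (hn : 2 ≤ n)
    (μ : (Sph n → ℝ) → ℝ) :
    (∀ (h_ : ℕ → Sph n → ℝ) (h : Sph n → ℝ), (∀ i, IsSuppRestriction (h_ i)) →
      IsSuppRestriction h → TauTendsto h_ h →
      Tendsto (fun i => μ (h_ i)) atTop (𝓝 (μ h))) ↔
    (∀ (h_ : ℕ → Sph n → ℝ) (h : Sph n → ℝ), (∀ i, IsSuppRestriction (h_ i)) →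
      IsSuppRestriction h → TendstoUniformly h_ h atTop →
      Tendsto (fun i => μ (h_ i)) atTop (𝓝 (μ h))) :=
  tau_continuity_iff_uniform_continuity_on_H_general n μ
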